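/- arXiv:1907.03992 — 4 statements merged into one kernel-verified Lean document; each statement's English description precedes it below -/
import Mathlib

section
/- In the presented monoid QM with generators x, y, q and relations x·q = q·x, y·q = q·y, y·x = x·y·q, for all natural numbers k, l, m, k', l', m' one has (x^k · y^l · q^m) · (x^{k'} · y^{l'} · q^{m'}) = x^{k+k'} · y^{l+l'} · q^{m+m'+l·k'}. -/
open FreeMonoid

/-- The defining relations of the monoid of quantum monomials
`QM = ⟨x, y, q | xq = qx, yq = qy, yx = xyq⟩`, where `x, y, q` are the generators
`of 0, of 1, of 2` of the free monoid on three letters. -/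
inductive QMRel : FreeMonoid (Fin 3) → FreeMonoid (Fin 3) → Prop
  | xq : QMRel (of 0 * of 2) (of 2 * of 0)
  | yq : QMRel (of 1 * of 2) (of 2 * of 1)
  | yx : QMRel (of 1 * of 0) (of 0 * of 1 * of 2)

/-- The congruence on the free monoid generated by the defining relations. -/
def QMcon : Con (FreeMonoid (Fin 3)) := conGen QMRel

/-- The monoid of quantum monomials, presented as the quotient of the free monoid on
three generators by the congruence generated by the relations. -/
def QM : Type := QMcon.Quotient

instance : Monoid QM := inferInstanceAs (Monoid QMcon.Quotient)

/-- The generator `x` of `QM`. -/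
def QM.x : QM := QMcon.mk' (of 0)

/-- The generator `y` of `QM`. -/
def QM.y : QM := QMcon.mk' (of 1)

/-- The generator `q` of `QM`. -/
def QM.q : QM := QMcon.mk' (of 2)

/-! The identity holds in any monoid whose elements `x, y, q` satisfy the defining relations:
`q` commutes with `x` and `y`, so all powers of `q` can be collected on the right, and moving
`y ^ l` past `x ^ k'` swaps `l * k'` pairs `y x`, each of which releases one `q`. -/

section QuantumRelation

variable {M : Type*} [Monoid M] {x y q : M}

theorem pow_mul_eq_mul_pow_mul_pow (hqy : Commute q y) (hyx : y * x = x * y * q) (l : ℕ) :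
    y ^ l * x = x * y ^ l * q ^ l := by
  induction l with
  | zero => simp
  | succ l ih =>
    calc y ^ (l + 1) * x = y ^ l * (y * x) := by rw [pow_succ, mul_assoc]
      _ = (y ^ l * x) * (y * q) := by rw [hyx, mul_assoc x, ← mul_assoc]
      _ = x * y ^ l * (q ^ l * y) * q := by rw [ih]; simp only [mul_assoc]
      _ = x * y ^ (l + 1) * q ^ (l + 1) := by
        rw [(hqy.pow_left l).eq]; simp only [pow_succ, mul_assoc]

theorem pow_mul_pow_eq_mul_pow_mul_pow (hqx : Commute q x) (hqy : Commute q y)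
    (hyx : y * x = x * y * q) (l k : ℕ) :
    y ^ l * x ^ k = x ^ k * y ^ l * q ^ (l * k) := by
  induction k with
  | zero => simp
  | succ k ih =>
    calc y ^ l * x ^ (k + 1) = x ^ k * (y ^ l * x) * q ^ (l * k) := by
          rw [pow_succ, ← mul_assoc, ih, mul_assoc, mul_assoc, (hqx.pow_left _).eq]
          simp only [mul_assoc]
      _ = x ^ (k + 1) * y ^ l * q ^ (l * (k + 1)) := by
          rw [pow_mul_eq_mul_pow_mul_pow hqy hyx, Nat.mul_succ, pow_add q _ l,
            (Commute.pow_pow_self q (l * k) l).eq]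
          simp only [pow_succ, mul_assoc]

theorem normalForm_mul_normalForm (hqx : Commute q x) (hqy : Commute q y)
    (hyx : y * x = x * y * q) (k l m k' l' m' : ℕ) :
    (x ^ k * y ^ l * q ^ m) * (x ^ k' * y ^ l' * q ^ m') =
      x ^ (k + k') * y ^ (l + l') * q ^ (m + m' + l * k') := by
  have hm : Commute (q ^ m) (x ^ k' * y ^ l') := (hqx.pow_pow m k').mul_right (hqy.pow_pow m l')
  calc (x ^ k * y ^ l * q ^ m) * (x ^ k' * y ^ l' * q ^ m')
      = x ^ k * (y ^ l * x ^ k') * y ^ l' * q ^ (m + m') := by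
        rw [pow_add, ← mul_assoc, mul_assoc _ (q ^ m), hm.eq]; simp only [mul_assoc]
    _ = x ^ (k + k') * y ^ (l + l') * q ^ (m + m' + l * k') := by
        rw [pow_mul_pow_eq_mul_pow_mul_pow hqx hqy hyx]
        simp only [mul_assoc]
        rw [(hqy.pow_pow (l * k') l').left_comm, add_comm (m + m'), pow_add q (l * k')]
        simp only [pow_add, mul_assoc]

end QuantumRelation

namespace QM

theorem mk'_eq_of_rel {a b : FreeMonoid (Fin 3)} (h : QMRel a b) : QMcon.mk' a = QMcon.mk' b :=
  QMcon.eq.mpr (ConGen.Rel.of _ _ h)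

theorem commute_q_x : Commute q x :=
  (mk'_eq_of_rel QMRel.xq).symm

theorem commute_q_y : Commute q y :=
  (mk'_eq_of_rel QMRel.yq).symm

theorem y_mul_x : y * x = x * y * q :=
  mk'_eq_of_rel QMRel.yx

end QM

/-- Multiplication of normal forms in `QM`:
`(x^k y^l q^m) * (x^{k'} y^{l'} q^{m'}) = x^{k+k'} y^{l+l'} q^{m+m'+l·k'}`. -/
theorem QM.normal_form_mul (k l m k' l' m' : ℕ) :
    (QM.x ^ k * QM.y ^ l * QM.q ^ m) * (QM.x ^ k' * QM.y ^ l' * QM.q ^ m') =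
      QM.x ^ (k + k') * QM.y ^ (l + l') * QM.q ^ (m + m' + l * k') :=
  normalForm_mul_normalForm QM.commute_q_x QM.commute_q_y QM.y_mul_x k l m k' l' m'
end

section
/- The assignment x ↦ (1, 0, 0), y ↦ (0, 1, 0), q ↦ (0, 0, 1) extends to a monoid isomorphism from the presented monoid QM = ⟨x, y, q | xq = qx, yq = qy, yx = xyq⟩ to ℕ × ℕ × ℕ equipped with the multiplication (k, l, m) * (k', l', m') = (k + k', l + l', m + m' + l·k'). In particular, every element of QM has a unique representative of the form x^k · y^l · q^m: if x^k y^l q^m = x^{k'} y^{l'} q^{m'} in QM then k = k', l = l', m = m'. -/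
open FreeMonoid

/-- `ℕ × ℕ × ℕ` regarded as a monoid with the twisted multiplication
`(k, l, m) * (k', l', m') = (k + k', l + l', m + m' + l·k')` and identity `(0, 0, 0)`. -/
def QMN : Type := ℕ × ℕ × ℕ

instance : Mul QMN :=
  ⟨fun a b => (a.1 + b.1, a.2.1 + b.2.1, a.2.2 + b.2.2 + a.2.1 * b.1)⟩

instance : One QMN := ⟨((0, 0, 0) : ℕ × ℕ × ℕ)⟩

instance : Monoid QMN where
  mul_assoc a b c := by
    obtain ⟨k, l, m⟩ := a; obtain ⟨k', l', m'⟩ := b; obtain ⟨k'', l'', m''⟩ := c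
    show ((k + k' + k'', l + l' + l'', m + m' + l * k' + m'' + (l + l') * k'') : ℕ × ℕ × ℕ) =
      (k + (k' + k''), l + (l' + l''), m + (m' + m'' + l' * k'') + l * (k' + k''))
    simp only [Prod.mk.injEq]
    refine ⟨by ring, by ring, by ring⟩
  one_mul a := by
    obtain ⟨k, l, m⟩ := a
    show ((0 + k, 0 + l, 0 + m + 0 * k) : ℕ × ℕ × ℕ) = (k, l, m)
    simp
  mul_one a := by
    obtain ⟨k, l, m⟩ := a
    show ((k + 0, l + 0, m + 0 + l * 0) : ℕ × ℕ × ℕ) = (k, l, m)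
    simp


/-! The assignment on generators respects the three relations in `QMN`, so it induces
`QM →* QMN`. Conversely `(k, l, m) ↦ x^k y^l q^m` is multiplicative in any monoid where
`x, y, q` satisfy the relations, because they force `y^l x^k = x^k y^l q^(l k)`; this gives
`QMN →* QM`. The two composites are the identity: on `QMN` by computing powers of the unit
vectors, on `QM` by checking the generators. -/

theorem pow_mul_pow_of_mul_eq_mul_mul {M : Type*} [Monoid M] {x y q : M} (hxq : Commute x q)
    (hyq : Commute y q) (hyx : y * x = x * y * q) (l k : ℕ) :
    y ^ l * x ^ k = x ^ k * y ^ l * q ^ (l * k) := by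
  have y_mul_pow_x (k : ℕ) : y * x ^ k = x ^ k * y * q ^ k := by
    induction k with
    | zero => simp
    | succ k ih =>
      calc y * x ^ (k + 1) = x ^ k * y * (q ^ k * x) := by
            rw [pow_succ, ← mul_assoc, ih, mul_assoc]
        _ = x ^ k * (y * x) * q ^ k := by
            rw [← (hxq.pow_right k).eq]; simp only [mul_assoc]
        _ = x ^ (k + 1) * y * q ^ (k + 1) := by
            rw [hyx, pow_succ, pow_succ']; simp only [mul_assoc]
  induction l with
  | zero => simp
  | succ l ih =>
    calc y ^ (l + 1) * x ^ k = y ^ l * (x ^ k * y * q ^ k) := by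
          rw [pow_succ, mul_assoc, y_mul_pow_x]
      _ = x ^ k * y ^ l * (q ^ (l * k) * y) * q ^ k := by
          rw [← mul_assoc, ← mul_assoc, ih]; simp only [mul_assoc]
      _ = x ^ k * y ^ (l + 1) * q ^ ((l + 1) * k) := by
          rw [← (hyq.pow_right _).eq, add_mul, one_mul, pow_add q, pow_succ y]
          simp only [mul_assoc]

namespace QMN

def mk (k l m : ℕ) : QMN := ((k, l, m) : ℕ × ℕ × ℕ)

theorem mk_mul_mk (k l m k' l' m' : ℕ) :
    mk k l m * mk k' l' m' = mk (k + k') (l + l') (m + m' + l * k') := rfl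

theorem mk_eq_mk_iff {k l m k' l' m' : ℕ} :
    mk k l m = mk k' l' m' ↔ k = k' ∧ l = l' ∧ m = m' := by
  show ((k, l, m) : ℕ × ℕ × ℕ) = (k', l', m') ↔ _
  simp only [Prod.mk.injEq]

theorem mk_one_zero_zero_pow (k : ℕ) : mk 1 0 0 ^ k = mk k 0 0 := by
  induction k with
  | zero => rfl
  | succ k ih => rw [pow_succ, ih]; rfl

theorem mk_zero_one_zero_pow (l : ℕ) : mk 0 1 0 ^ l = mk 0 l 0 := by
  induction l with
  | zero => rfl
  | succ l ih => rw [pow_succ, ih]; rfl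

theorem mk_zero_zero_one_pow (m : ℕ) : mk 0 0 1 ^ m = mk 0 0 m := by
  induction m with
  | zero => rfl
  | succ m ih => rw [pow_succ, ih]; rfl

theorem normal_form (k l m : ℕ) : mk 1 0 0 ^ k * mk 0 1 0 ^ l * mk 0 0 1 ^ m = mk k l m := by
  rw [mk_one_zero_zero_pow, mk_zero_one_zero_pow, mk_zero_zero_one_pow, mk_mul_mk, mk_mul_mk]
  simp only [Nat.add_zero, Nat.zero_add, Nat.mul_zero]

def lift {M : Type*} [Monoid M] (x y q : M) (hxq : Commute x q) (hyq : Commute y q)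
    (hyx : y * x = x * y * q) : QMN →* M where
  toFun a := let (k, l, m) : ℕ × ℕ × ℕ := a; x ^ k * y ^ l * q ^ m
  map_one' := by
    show x ^ 0 * y ^ 0 * q ^ 0 = 1
    simp
  map_mul' := by
    rintro ⟨k, l, m⟩ ⟨k', l', m'⟩
    show x ^ (k + k') * y ^ (l + l') * q ^ (m + m' + l * k') =
      x ^ k * y ^ l * q ^ m * (x ^ k' * y ^ l' * q ^ m')
    have hq : Commute (q ^ m) (x ^ k' * y ^ l') :=
      (hxq.pow_pow k' m).symm.mul_right (hyq.pow_pow l' m).symm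
    calc x ^ (k + k') * y ^ (l + l') * q ^ (m + m' + l * k')
        = x ^ k * x ^ k' * y ^ l * (y ^ l' * q ^ (l * k')) * q ^ m * q ^ m' := by
          rw [pow_add, pow_add, add_comm (m + m'), pow_add, pow_add]; simp only [mul_assoc]
      _ = x ^ k * (x ^ k' * y ^ l * q ^ (l * k')) * y ^ l' * q ^ m * q ^ m' := by
          rw [(hyq.pow_pow l' (l * k')).eq]; simp only [mul_assoc]
      _ = x ^ k * y ^ l * (x ^ k' * y ^ l' * q ^ m) * q ^ m' := by
          rw [← pow_mul_pow_of_mul_eq_mul_mul hxq hyq hyx]; simp only [mul_assoc]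
      _ = x ^ k * y ^ l * q ^ m * (x ^ k' * y ^ l' * q ^ m') := by
          rw [← hq.eq]; simp only [mul_assoc]

end QMN

namespace QM

theorem commute_x_q : Commute x q := by
  have h := mk'_eq_of_rel QMRel.xq
  simp only [map_mul] at h
  exact h

theorem commute_y_q : Commute y q := by
  have h := mk'_eq_of_rel QMRel.yq
  simp only [map_mul] at h
  exact h

def toQMN : QM →* QMN :=
  QMcon.lift (FreeMonoid.lift ![QMN.mk 1 0 0, QMN.mk 0 1 0, QMN.mk 0 0 1])
    (Con.conGen_le.mpr fun _ _ h => by cases h <;> rfl)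

end QM

def QMN.toQM : QMN →* QM := QMN.lift QM.x QM.y QM.q QM.commute_x_q QM.commute_y_q QM.y_mul_x

theorem QM.toQMN_toQM (a : QMN) : QM.toQMN (QMN.toQM a) = a := by
  obtain ⟨k, l, m⟩ := a
  show QM.toQMN (QM.x ^ k * QM.y ^ l * QM.q ^ m) = QMN.mk k l m
  rw [map_mul, map_mul, map_pow, map_pow, map_pow]
  exact QMN.normal_form k l m

theorem QMN.toQM_toQMN (u : QM) : QMN.toQM (QM.toQMN u) = u := by
  suffices QMN.toQM.comp QM.toQMN = MonoidHom.id QM from DFunLike.congr_fun this u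
  refine Con.hom_ext (FreeMonoid.hom_eq fun a => ?_)
  fin_cases a
  · show QM.x ^ 1 * QM.y ^ 0 * QM.q ^ 0 = QM.x
    simp
  · show QM.x ^ 0 * QM.y ^ 1 * QM.q ^ 0 = QM.y
    simp
  · show QM.x ^ 0 * QM.y ^ 0 * QM.q ^ 1 = QM.q
    simp

def QM.equivQMN : QM ≃* QMN :=
  QM.toQMN.toMulEquiv QMN.toQM (MonoidHom.ext QMN.toQM_toQMN) (MonoidHom.ext QM.toQMN_toQM)

/-- The assignment `x ↦ (1,0,0)`, `y ↦ (0,1,0)`, `q ↦ (0,0,1)` extends to a monoid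
isomorphism from `QM` to `ℕ × ℕ × ℕ` with the twisted multiplication; in particular the
normal form `x^k y^l q^m` of an element of `QM` is unique. -/
theorem QM.equiv_QMN :
    (∃ φ : QM ≃* QMN,
        φ QM.x = ((1, 0, 0) : ℕ × ℕ × ℕ) ∧
        φ QM.y = ((0, 1, 0) : ℕ × ℕ × ℕ) ∧
        φ QM.q = ((0, 0, 1) : ℕ × ℕ × ℕ)) ∧
    (∀ k l m k' l' m' : ℕ,
        QM.x ^ k * QM.y ^ l * QM.q ^ m = QM.x ^ k' * QM.y ^ l' * QM.q ^ m' →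
        k = k' ∧ l = l' ∧ m = m') := by
  refine ⟨⟨QM.equivQMN, rfl, rfl, rfl⟩, fun k l m k' l' m' h => QMN.mk_eq_mk_iff.mp ?_⟩
  have h : QMN.toQM (QMN.mk k l m) = QMN.toQM (QMN.mk k' l' m') := h
  rw [← QM.toQMN_toQM (QMN.mk k l m), h, QM.toQMN_toQM]
end

section
/- Let M be a monoid equipped with a strict partial order ≺ such that a ≺ a' implies a * b ≺ a' * b and b * a ≺ b * a' for all a, a', b in M. Let f : Fin N → Fin n be a surjection such that for all i < j in Fin n, the minimal element of f⁻¹(i) is strictly less than the minimal element of f⁻¹(j). Let b : Fin N → M be any tuple, and let a, a' : Fin n → M be tuples with a strictly less than a' in the lexicographic order induced by ≺ (i.e., there is an index j₀ with a(j) = a'(j) for all j < j₀ and a(j₀) ≺ a'(j₀)). Then the tuple i ↦ a(f(i)) * b(i) is strictly less than the tuple i ↦ a'(f(i)) * b(i) in the lexicographic order on Fin N → M. -/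
/-- Shuffle word operad composition is strictly increasing in the outer argument.

Let `M` be a monoid with a strict partial order `r` compatible with multiplication on
both sides. Let `f : Fin N → Fin n` be a surjection such that for `i < j` the minimum
of the fiber `f⁻¹(i)` is strictly smaller than the minimum of the fiber `f⁻¹(j)`.
If `a` is lexicographically smaller than `a'` (there is `j₀` with `a j = a' j` for
`j < j₀` and `r (a j₀) (a' j₀)`), then for any tuple `b` the composite
`i ↦ a (f i) * b i` is lexicographically smaller than `i ↦ a' (f i) * b i`. -/
theorem word_operad_outer_monotone {M : Type*} [Monoid M] (r : M → M → Prop)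
    (hirr : ∀ x : M, ¬ r x x)
    (htrans : ∀ x y z : M, r x y → r y z → r x z)
    (hmul_right : ∀ x x' y : M, r x x' → r (x * y) (x' * y))
    (hmul_left : ∀ x x' y : M, r x x' → r (y * x) (y * x'))
    {N n : ℕ} (f : Fin N → Fin n) (hf : Function.Surjective f)
    (hmin : ∀ i j : Fin n, i < j →
      (Finset.univ.filter fun x => f x = i).min'
          ⟨(hf i).choose, by simp [(hf i).choose_spec]⟩ <
        (Finset.univ.filter fun x => f x = j).min'
          ⟨(hf j).choose, by simp [(hf j).choose_spec]⟩)
    (b : Fin N → M) (a a' : Fin n → M)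
    (hlex : ∃ j₀ : Fin n, (∀ j : Fin n, j < j₀ → a j = a' j) ∧ r (a j₀) (a' j₀)) :
    ∃ i₀ : Fin N, (∀ i : Fin N, i < i₀ → a (f i) * b i = a' (f i) * b i) ∧
      r (a (f i₀) * b i₀) (a' (f i₀) * b i₀) := by
  obtain ⟨j₀, heq, hr⟩ := hlex
  have hne : ∀ j : Fin n, ((Finset.univ.filter fun x => f x = j)).Nonempty :=
    fun j => ⟨(hf j).choose, by simp [(hf j).choose_spec]⟩
  set i₀ := (Finset.univ.filter fun x => f x = j₀).min' (hne j₀) with hi₀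
  have hfi₀ : f i₀ = j₀ := by
    have := Finset.min'_mem (Finset.univ.filter fun x => f x = j₀) (hne j₀)
    simpa using this
  refine ⟨i₀, ?_, ?_⟩
  · intro i hi
    have hflt : f i < j₀ := by
      rcases lt_trichotomy (f i) j₀ with h | h | h
      · exact h
      · exact absurd hi (not_lt.2 (Finset.min'_le _ _ (by simp [h])))
      · have hm := hmin j₀ (f i) h
        have : (Finset.univ.filter fun x => f x = f i).min' (hne (f i)) ≤ i :=
          Finset.min'_le _ _ (by simp)
        exact absurd (lt_of_le_of_lt this hi) (not_lt.2 (le_of_lt hm))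
    rw [heq _ hflt]
  · rw [hfi₀]
    exact hmul_right _ _ _ hr
end

section
/- Let M be a monoid equipped with a strict partial order ≺ such that a ≺ a' implies a * b ≺ a' * b and b * a ≺ b * a' for all a, a', b in M. Let f : Fin N → Fin n be any function, let a : Fin n → M be a tuple, fix j : Fin n, and let b, b' : Fin N → M be tuples that agree at every index i with f(i) ≠ j, and such that there exists an index i₀ with f(i₀) = j, b(i) = b'(i) for all i < i₀, and b(i₀) ≺ b'(i₀). Then the tuple i ↦ a(f(i)) * b(i) is strictly less than the tuple i ↦ a(f(i)) * b'(i) in the lexicographic order on Fin N → M induced by ≺. -/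
/-- Shuffle word operad composition is strictly increasing in each inner argument.

Let `M` be a monoid with a strict partial order `r` compatible with multiplication on
both sides. Let `f : Fin N → Fin n` be any function, `a : Fin n → M` a tuple, and fix
`j : Fin n`. Suppose `b, b' : Fin N → M` agree at every index `i` with `f i ≠ j`, and
there is `i₀` with `f i₀ = j`, `b i = b' i` for all `i < i₀`, and `r (b i₀) (b' i₀)`
(i.e. the inner tuple supported on the fiber `f⁻¹(j)` is replaced by a lexicographically
larger one). Then `i ↦ a (f i) * b i` is lexicographically smaller than
`i ↦ a (f i) * b' i`. -/
theorem word_operad_inner_monotone {M : Type*} [Monoid M] (r : M → M → Prop)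
    (hirr : ∀ x : M, ¬ r x x)
    (htrans : ∀ x y z : M, r x y → r y z → r x z)
    (hmul_right : ∀ x x' y : M, r x x' → r (x * y) (x' * y))
    (hmul_left : ∀ x x' y : M, r x x' → r (y * x) (y * x'))
    {N n : ℕ} (f : Fin N → Fin n) (a : Fin n → M) (j : Fin n)
    (b b' : Fin N → M)
    (hagree : ∀ i : Fin N, f i ≠ j → b i = b' i)
    (hlex : ∃ i₀ : Fin N, f i₀ = j ∧ (∀ i : Fin N, i < i₀ → b i = b' i) ∧ r (b i₀) (b' i₀)) :
    ∃ i₀ : Fin N, (∀ i : Fin N, i < i₀ → a (f i) * b i = a (f i) * b' i) ∧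
      r (a (f i₀) * b i₀) (a (f i₀) * b' i₀) := by
  obtain ⟨i₀, hfj, hbefore, hr⟩ := hlex
  exact ⟨i₀, fun i hi => by rw [hbefore i hi], hmul_left _ _ _ hr⟩
end
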